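/- Let M be a connected smooth manifold, X a smooth vector field on M admitting a complete smooth flow φ, and f : M → ℝ a smooth function such that 1 + (Xf)(x) > 0 for all x ∈ M. Define η : M → M by η(x) := φ_{f(x)}(x). Then for every x ∈ M the differential of η at x sends the vector Y(x) := X(x)/(1 + (Xf)(x)) to X(η(x)); that is, Dη_x(X(x)/(1 + (Xf)(x))) = X(φ_{f(x)}(x)). -/

import Mathlib

open Manifold

noncomputable section

/-- A smooth vector field on a manifold, seen as a smooth section of the tangent bundle. -/
def IsSmoothVectorField {E : Type*} [NormedAddCommGroup E] [NormedSpace ℝ E]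
    {H : Type*} [TopologicalSpace H] (I : ModelWithCorners ℝ E H)
    {M : Type*} [TopologicalSpace M] [ChartedSpace H M] [IsManifold I ((⊤ : ℕ∞) : WithTop ℕ∞) M]
    (X : ∀ x : M, TangentSpace I x) : Prop :=
  ContMDiff I I.tangent (⊤ : ℕ∞) (fun x => (⟨x, X x⟩ : TangentBundle I M))

/-- A complete smooth flow of the vector field `X`: a smooth map `φ : ℝ × M → M` with
`φ 0 = id`, `φ (s+t) = φ s ∘ φ t`, such that for each `x` the curve `t ↦ φ t x` has
derivative `X (φ t x)` at every time `t`. -/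
structure IsCompleteSmoothFlow {E : Type*} [NormedAddCommGroup E] [NormedSpace ℝ E]
    {H : Type*} [TopologicalSpace H] (I : ModelWithCorners ℝ E H)
    {M : Type*} [TopologicalSpace M] [ChartedSpace H M] [IsManifold I ((⊤ : ℕ∞) : WithTop ℕ∞) M]
    (X : ∀ x : M, TangentSpace I x) (φ : ℝ → M → M) : Prop where
  smooth : ContMDiff (𝓘(ℝ, ℝ).prod I) I (⊤ : ℕ∞) (fun p : ℝ × M => φ p.1 p.2)
  init : ∀ x, φ 0 x = x
  add : ∀ s t x, φ (s + t) x = φ s (φ t x)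
  deriv : ∀ t x, mfderiv 𝓘(ℝ, ℝ) I (fun s => φ s x) t ((1 : ℝ) : TangentSpace 𝓘(ℝ, ℝ) t)
    = X (φ t x)

/-- The derivative of `f` along the vector field `X`, i.e. `(Xf)(x) = df_x (X x)`. -/
def vfDeriv {E : Type*} [NormedAddCommGroup E] [NormedSpace ℝ E]
    {H : Type*} [TopologicalSpace H] (I : ModelWithCorners ℝ E H)
    {M : Type*} [TopologicalSpace M] [ChartedSpace H M] [IsManifold I ((⊤ : ℕ∞) : WithTop ℕ∞) M]
    (X : ∀ x : M, TangentSpace I x) (f : M → ℝ) (x : M) : ℝ :=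
  mfderiv I 𝓘(ℝ, ℝ) f x (X x)

/-- Let `X` be a smooth vector field on a connected manifold `M` with complete smooth flow `φ`,
and let `f : M → ℝ` be smooth with `1 + Xf > 0` everywhere.  Define `η x := φ (f x) x`.  Then
for every `x` the differential of `η` at `x` sends `X x / (1 + (Xf) x)` to `X (η x)`. -/
theorem timeChange_differential_sends_generator
    {E : Type*} [NormedAddCommGroup E] [NormedSpace ℝ E]
    {H : Type*} [TopologicalSpace H] (I : ModelWithCorners ℝ E H)
    {M : Type*} [TopologicalSpace M] [ChartedSpace H M] [IsManifold I ((⊤ : ℕ∞) : WithTop ℕ∞) M]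
    [ConnectedSpace M]
    (X : ∀ x : M, TangentSpace I x) (hX : IsSmoothVectorField I X)
    (φ : ℝ → M → M) (hφ : IsCompleteSmoothFlow I X φ)
    (f : M → ℝ) (hf : ContMDiff I 𝓘(ℝ, ℝ) (⊤ : ℕ∞) f)
    (hpos : ∀ x, 0 < 1 + vfDeriv I X f x)
    (x : M) :
    mfderiv I I (fun y => φ (f y) y) x ((1 + vfDeriv I X f x)⁻¹ • X x)
      = X (φ (f x) x) := by
  classical
  have hΦd : ∀ p : ℝ × M, MDifferentiableAt (𝓘(ℝ, ℝ).prod I) I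
      (fun p : ℝ × M => φ p.1 p.2) p :=
    fun p => (hφ.smooth p).mdifferentiableAt (by simp)
  have hcurve : ∀ (y : M) (t : ℝ), MDifferentiableAt 𝓘(ℝ, ℝ) I (fun s => φ s y) t := by
    intro y t
    exact (hΦd (t, y)).comp t (mdifferentiableAt_id.prodMk mdifferentiableAt_const)
  have hmap : ∀ (t : ℝ) (y : M), MDifferentiableAt I I (φ t) y := by
    intro t y
    exact (hΦd (t, y)).comp y (mdifferentiableAt_const.prodMk mdifferentiableAt_id)
  -- derivative of the time-curve, applied to an arbitrary scalar
  have hA : ∀ (t : ℝ) (y : M) (v : ℝ),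
      mfderiv 𝓘(ℝ, ℝ) I (fun s => φ s y) t v = v • X (φ t y) := by
    intro t y v
    calc (mfderiv 𝓘(ℝ, ℝ) I (fun s => φ s y) t) v
        = v • (mfderiv 𝓘(ℝ, ℝ) I (fun s => φ s y) t) ((1 : ℝ) : TangentSpace 𝓘(ℝ, ℝ) t) := by
          have hm := (mfderiv 𝓘(ℝ, ℝ) I (fun s => φ s y) t).map_smul v
            ((1 : ℝ) : TangentSpace 𝓘(ℝ, ℝ) t)
          rw [← hm]
          congr 1
          show v = v • (1 : ℝ)
          rw [smul_eq_mul, mul_one]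
      _ = v • X (φ t y) := by rw [hφ.deriv t y]
  -- the differential of the time-t map sends X to X
  have hB : ∀ (t : ℝ) (y : M), mfderiv I I (φ t) y (X y) = X (φ t y) := by
    intro t y
    have h2 : (φ t ∘ fun s : ℝ => φ s y) = (fun s : ℝ => φ s (φ t y)) := by
      funext s
      simp only [Function.comp_apply, ← hφ.add, add_comm]
    have h1 : mfderiv 𝓘(ℝ, ℝ) I (φ t ∘ fun s : ℝ => φ s y) 0 =
        (mfderiv I I (φ t) (φ 0 y)).comp (mfderiv 𝓘(ℝ, ℝ) I (fun s : ℝ => φ s y) 0) :=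
      mfderiv_comp 0 (hmap t _) (hcurve y 0)
    have h3 : mfderiv I I (φ t) (φ 0 y) (X (φ 0 y)) = X (φ 0 (φ t y)) := by
      have e := congrFun (congrArg DFunLike.coe h1) (1 : ℝ)
      rw [h2] at e
      rw [← hφ.deriv 0 y, ← hφ.deriv 0 (φ t y)]
      exact e.symm
    rw [hφ.init] at h3
    rw [hφ.init (φ t y)] at h3
    exact h3
  -- now the main computation
  have hgd : MDifferentiableAt I (𝓘(ℝ, ℝ).prod I) (fun y => (f y, y)) x :=
    ((hf x).mdifferentiableAt (by simp)).prodMk mdifferentiableAt_id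
  have hcomp : mfderiv I I (fun y => φ (f y) y) x =
      (mfderiv (𝓘(ℝ, ℝ).prod I) I (fun p : ℝ × M => φ p.1 p.2) (f x, x)).comp
        (mfderiv I (𝓘(ℝ, ℝ).prod I) (fun y => (f y, y)) x) :=
    mfderiv_comp (I := I) (I' := 𝓘(ℝ, ℝ).prod I) (I'' := I)
      (f := fun y => (f y, y)) (g := fun p : ℝ × M => φ p.1 p.2) x (hΦd (f x, x)) hgd
  have hg : mfderiv I (𝓘(ℝ, ℝ).prod I) (fun y => (f y, y)) x =
      (mfderiv I 𝓘(ℝ, ℝ) f x).prod (mfderiv I I id x) :=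
    ((hf x).mdifferentiableAt (by simp)).mfderiv_prod mdifferentiableAt_id
  set c : ℝ := 1 + vfDeriv I X f x with hc
  have hc0 : c ≠ 0 := ne_of_gt (hpos x)
  rw [hcomp, ContinuousLinearMap.comp_apply]
  have hwe : mfderiv I (𝓘(ℝ, ℝ).prod I) (fun y => (f y, y)) x (c⁻¹ • X x) =
      ((mfderiv I 𝓘(ℝ, ℝ) f x).prod (mfderiv I I id x)) (c⁻¹ • X x) :=
    congrFun (congrArg DFunLike.coe hg) _
  have hw1 : (mfderiv I (𝓘(ℝ, ℝ).prod I) (fun y => (f y, y)) x (c⁻¹ • X x)).1 =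
      c⁻¹ * vfDeriv I X f x := by
    rw [hwe]
    show (mfderiv I 𝓘(ℝ, ℝ) f x) (c⁻¹ • X x) = _
    rw [ContinuousLinearMap.map_smul]
    rfl
  have hw2 : (mfderiv I (𝓘(ℝ, ℝ).prod I) (fun y => (f y, y)) x (c⁻¹ • X x)).2 =
      c⁻¹ • X x := by
    rw [hwe]
    show (mfderiv I I id x) (c⁻¹ • X x) = _
    rw [mfderiv_id]
    rfl
  rw [mfderiv_prod_eq_add_apply (hΦd (f x, x))]
  rw [hw1, hw2, hA]
  rw [ContinuousLinearMap.map_smul, hB]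
  rw [← add_smul]
  have harith : c⁻¹ * vfDeriv I X f x + c⁻¹ = 1 := by
    field_simp
    rw [hc]; ring
  rw [harith, one_smul]

end
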